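/- arXiv:math/0304081 — 3 statements merged into one kernel-verified Lean document; each statement's English description precedes it below -/
import Mathlib

section
/- (Kalmár's lemma) Let A be a formula all of whose atoms occur among the distinct atoms B₁, B₂, …, B_k, and let g be any Boolean valuation. Writing X^g for X when g(X) = 1 and for (¬X) when g(X) = 0, the sequence B₁^g, B₂^g, …, B_k^g ⊢ A^g is derivable in NPC. -/
/-!
Induction on `A`, over the context of the atoms of `A` listed with repetitions: `A^g` is
derived from the signed immediate subformulas along the truth table of the connective (e.g.
`¬X ⊢ ¬(X & Y)` by negation introduction against `X & Y ⊢ X`). Passing to the context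
`B₁^g, …, B_k^g` is structural: NPC admits weakening, exchange and contraction, because a
nonempty context can be traded for the single hypothesis given by the conjunction of its members.
-/

/-- Propositional formulas over a type `V` of atoms, built from atoms by
conjunction and negation. -/
inductive Formula (V : Type*) : Type _
  | atom : V → Formula V
  | conj : Formula V → Formula V → Formula V
  | neg  : Formula V → Formula V

/-- Natural propositional calculus (NPC) derivability `Γ ⊢ A`. -/
inductive NPC {V : Type*} : List (Formula V) → Formula V → Prop
  | ax (C : Formula V) : NPC [C] C
  | andElimLeft {Γ : List (Formula V)} {A B : Formula V} :
      NPC Γ (Formula.conj A B) → NPC Γ A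
  | andElimRight {Γ : List (Formula V)} {A B : Formula V} :
      NPC Γ (Formula.conj A B) → NPC Γ B
  | andIntro {Γ₁ Γ₂ : List (Formula V)} {A B : Formula V} :
      NPC Γ₁ A → NPC Γ₂ B → NPC (Γ₁ ++ Γ₂) (Formula.conj A B)
  | negElim {Γ : List (Formula V)} {C : Formula V} :
      NPC Γ (Formula.neg (Formula.neg C)) → NPC Γ C
  | negIntro {Γ₁ Γ₂ : List (Formula V)} {A C : Formula V} :
      NPC (Γ₁ ++ [C]) A → NPC (Γ₂ ++ [C]) (Formula.neg A) →
      NPC (Γ₁ ++ Γ₂) (Formula.neg C)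

/-- A Boolean valuation: a `{0,1}`-valued function on formulas respecting
negation and conjunction. -/
structure BooleanValuation (V : Type*) where
  g : Formula V → ℕ
  range01 : ∀ A, g A = 0 ∨ g A = 1
  neg_eq : ∀ A, g (Formula.neg A) = 1 - g A
  conj_eq : ∀ A B, g (Formula.conj A B) = g A * g B

/-- The list of atoms occurring in a formula. -/
def Formula.atoms {V : Type*} : Formula V → List V
  | Formula.atom v => [v]
  | Formula.conj A B => A.atoms ++ B.atoms
  | Formula.neg A => A.atoms

/-- `X^g`: the formula `X` itself if `g(X) = 1`, and `(¬X)` if `g(X) = 0`. -/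
noncomputable def signed {V : Type*} (g : BooleanValuation V) (X : Formula V) :
    Formula V :=
  if g.g X = 1 then X else Formula.neg X

namespace NPC

open Formula

variable {V : Type*} {Γ Δ : List (Formula V)} {A C E W X Y : Formula V}

theorem weaken_right (h : NPC Γ A) (D : Formula V) : NPC (Γ ++ [D]) A :=
  (h.andIntro (ax D)).andElimLeft

theorem not_not_intro (h : NPC Γ A) : NPC Γ (neg (neg A)) := by
  simpa using negIntro (Γ₂ := []) (h.weaken_right (neg A)) (ax (neg A))

theorem cut (h : NPC (Γ ++ [C]) W) (hC : NPC Δ C) : NPC (Δ ++ Γ) W :=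
  have hnC : NPC (Γ ++ [neg W]) (neg C) := negIntro h ((ax (neg W)).weaken_right C)
  (negIntro (hC.weaken_right (neg W)) hnC).negElim

theorem cut_single (h : NPC [C] W) (hC : NPC Δ C) : NPC Δ W := by
  simpa using cut (Γ := []) h hC

theorem contract_pair (h : NPC [E, E] W) : NPC [E] W := by
  have h₁ : NPC ([E] ++ [neg W]) (neg E) :=
    negIntro (Γ₁ := [E]) h ((ax (neg W)).weaken_right E)
  have h₂ : NPC [neg W] (neg E) := by
    simpa using negIntro (Γ₂ := []) (h₁.cut (ax (neg W))) (ax E).not_not_intro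
  exact (negIntro (Γ₁ := []) (by simpa using h₂)
    ((ax E).not_not_intro.weaken_right (neg W))).negElim

theorem single_of_forall_mem (h : NPC Γ W) : ∀ {E : Formula V}, (∀ c ∈ Γ, NPC [E] c) → NPC [E] W := by
  induction h with
  | ax C => exact fun hE => hE C (List.mem_singleton_self C)
  | andElimLeft _ ih => exact fun hE => (ih hE).andElimLeft
  | andElimRight _ ih => exact fun hE => (ih hE).andElimRight
  | negElim _ ih => exact fun hE => (ih hE).negElim
  | andIntro _ _ ih₁ ih₂ =>
    intro E hE
    exact contract_pair <| (ih₁ fun c hc => hE c (List.mem_append_left _ hc)).andIntro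
      (ih₂ fun c hc => hE c (List.mem_append_right _ hc))
  | @negIntro Γ₁ Γ₂ A C _ _ ih₁ ih₂ =>
    intro E hE
    -- Discharge `C` together with `E` through the single hypothesis `E & C`.
    have hEC : ∀ Γ' ⊆ Γ₁ ++ Γ₂, ∀ c ∈ Γ' ++ [C], NPC [conj E C] c := by
      intro Γ' hΓ' c hc
      rcases List.mem_append.1 hc with hc | hc
      · exact (hE c (hΓ' hc)).cut_single (ax _).andElimLeft
      · exact List.mem_singleton.1 hc ▸ (ax _).andElimRight
    have hpair : NPC ([E] ++ [C]) (conj E C) := (ax E).andIntro (ax C)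
    exact contract_pair <| negIntro
      ((ih₁ (hEC Γ₁ (List.subset_append_left _ _))).cut_single hpair)
      ((ih₂ (hEC Γ₂ (List.subset_append_right _ _))).cut_single hpair)

theorem foldl_conj (d : Formula V) (Δ : List (Formula V)) : NPC (d :: Δ) (Δ.foldl conj d) := by
  induction Δ using List.reverseRecOn with
  | nil => exact ax d
  | append_singleton Δ x ih => simpa using ih.andIntro (ax x)

theorem of_mem_foldl_conj {d c : Formula V} {Δ : List (Formula V)} (hc : c ∈ d :: Δ) :
    NPC [Δ.foldl conj d] c := by
  induction Δ using List.reverseRecOn with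
  | nil => exact List.mem_singleton.1 hc ▸ ax d
  | append_singleton Δ x ih =>
    rw [List.foldl_append, List.foldl_cons, List.foldl_nil]
    rcases List.mem_append.1 (by simpa using hc : c ∈ (d :: Δ) ++ [x]) with hc | hc
    · exact (ih hc).cut_single (ax _).andElimLeft
    · exact List.mem_singleton.1 hc ▸ (ax _).andElimRight

theorem mono (h : NPC Γ W) (hsub : Γ ⊆ Δ) : NPC Δ W := by
  cases Δ with
  | nil => rwa [List.subset_nil.1 hsub] at h
  | cons d Δ =>
    exact (h.single_of_forall_mem fun c hc => of_mem_foldl_conj (hsub hc)).cut_single (foldl_conj d Δ)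

theorem not_conj_of_not_left (h : NPC Γ (neg X)) : NPC Γ (neg (conj X Y)) := by
  simpa using negIntro (Γ₁ := []) (ax (conj X Y)).andElimLeft (h.weaken_right _)

theorem not_conj_of_not_right (h : NPC Γ (neg Y)) : NPC Γ (neg (conj X Y)) := by
  simpa using negIntro (Γ₁ := []) (ax (conj X Y)).andElimRight (h.weaken_right _)

end NPC

namespace BooleanValuation

variable {V : Type*} (g : BooleanValuation V) {X : Formula V}

theorem signed_of_eq_one (h : g.g X = 1) : signed g X = X := by
  simp [signed, h]

theorem signed_of_eq_zero (h : g.g X = 0) : signed g X = Formula.neg X := by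
  simp [signed, h]

theorem npc_atoms_signed : ∀ A : Formula V,
    NPC (A.atoms.map fun v => signed g (Formula.atom v)) (signed g A)
  | .atom v => NPC.ax _
  | .conj X Y => by
    have ihX := npc_atoms_signed X
    have ihY := npc_atoms_signed Y
    simp only [Formula.atoms, List.map_append]
    rcases g.range01 X with hX | hX
    · rw [g.signed_of_eq_zero (by rw [g.conj_eq, hX, zero_mul])]
      rw [g.signed_of_eq_zero hX] at ihX
      exact ihX.not_conj_of_not_left.mono (List.subset_append_left _ _)
    rcases g.range01 Y with hY | hY
    · rw [g.signed_of_eq_zero (by rw [g.conj_eq, hY, mul_zero])]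
      rw [g.signed_of_eq_zero hY] at ihY
      exact ihY.not_conj_of_not_right.mono (List.subset_append_right _ _)
    rw [g.signed_of_eq_one (by rw [g.conj_eq, hX, hY])]
    rw [g.signed_of_eq_one hX] at ihX
    rw [g.signed_of_eq_one hY] at ihY
    exact ihX.andIntro ihY
  | .neg B => by
    have ihB := npc_atoms_signed B
    rcases g.range01 B with hB | hB
    · rw [g.signed_of_eq_one (by rw [g.neg_eq, hB])]
      rwa [g.signed_of_eq_zero hB] at ihB
    · rw [g.signed_of_eq_zero (by rw [g.neg_eq, hB])]
      rw [g.signed_of_eq_one hB] at ihB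
      exact ihB.not_not_intro

end BooleanValuation

theorem kalmar_lemma_general {V : Type*} (A : Formula V) (L : List V)
    (hsub : ∀ v ∈ A.atoms, v ∈ L) (g : BooleanValuation V) :
    NPC (L.map fun v => signed g (Formula.atom v)) (signed g A) :=
  (g.npc_atoms_signed A).mono (List.map_subset _ hsub)

/-- Lm. 2 (Kalmár's lemma): if all atoms of `A` occur among the distinct atoms
`B₁, …, B_k` (given as a list `L` of atoms without duplicates) and `g` is any
Boolean valuation, then the sequence `B₁^g, …, B_k^g ⊢ A^g` is derivable in
NPC. -/
theorem kalmar_lemma {V : Type*} (A : Formula V) (L : List V) (hL : L.Nodup)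
    (hsub : ∀ v ∈ A.atoms, v ∈ L) (g : BooleanValuation V) :
    NPC (L.map fun v => signed g (Formula.atom v)) (signed g A) :=
  kalmar_lemma_general A L hsub g
end

section
/- (Th. 5, Bernoulli Formula) Let b be a B-function on a Boolean algebra α, let s : ℕ → α be mutually independent for b, and suppose there is a real number p with b(s(n)) = p for all n. Then for all natural numbers k ≤ r, b of the [s]-sum of range r with V-number k equals (r! / (k!·(r−k)!)) · p^k · (1−p)^(r−k); that is, b(⨆_{K ⊆ {0,…,r−1}, |K| = k} ((⨅_{i ∈ K} s(i)) ⊓ (⨅_{i ∈ {0,…,r−1} \ K} (s(i))ᶜ))) = C(r,k) · p^k · (1−p)^(r−k). -/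
/-- A B-function on a Boolean algebra `α` of events: a `[0,1]`-valued function
with `b(C₀) = 1` for some event `C₀` and `b(A ⊓ B) + b(A ⊓ Bᶜ) = b(A)` for all
events `A`, `B`. -/
structure BFunction (α : Type*) [BooleanAlgebra α] where
  toFun : α → ℝ
  nonneg : ∀ A, 0 ≤ toFun A
  le_one : ∀ A, toFun A ≤ 1
  exists_eq_one : ∃ C₀, toFun C₀ = 1
  inf_add_inf_compl : ∀ A B, toFun (A ⊓ B) + toFun (A ⊓ Bᶜ) = toFun A

/-- A sequence of events `s : ℕ → α` is mutually independent for the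
B-function `b` if for every finite set `S` of indices,
`b(⨅ i ∈ S, s i) = ∏ i ∈ S, b (s i)`. -/
def MutuallyIndependent {α : Type*} [BooleanAlgebra α] (b : BFunction α)
    (s : ℕ → α) : Prop :=
  ∀ S : Finset ℕ, b.toFun (S.inf s) = ∏ i ∈ S, b.toFun (s i)

section Aux

variable {α : Type*} [BooleanAlgebra α] (b : BFunction α)

lemma BFun_bot : b.toFun ⊥ = 0 := by
  have h := b.inf_add_inf_compl ⊥ ⊥
  simp only [inf_idem, inf_bot_eq, bot_inf_eq] at h
  linarith

lemma BFun_disjoint_add {A B : α} (h : Disjoint A B) :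
    b.toFun (A ⊔ B) = b.toFun A + b.toFun B := by
  have h1 := b.inf_add_inf_compl (A ⊔ B) A
  have e1 : (A ⊔ B) ⊓ A = A := inf_eq_right.mpr le_sup_left
  have hBA : B ≤ Aᶜ := h.symm.le_compl_right
  have e2 : (A ⊔ B) ⊓ Aᶜ = B := by
    rw [inf_sup_right, inf_compl_self, bot_sup_eq, inf_eq_left.mpr hBA]
  rw [e1, e2] at h1
  linarith

lemma BFun_sup_sum {ι : Type*} [DecidableEq ι] (F : Finset ι) (f : ι → α)
    (hdis : ∀ i ∈ F, ∀ j ∈ F, i ≠ j → Disjoint (f i) (f j)) :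
    b.toFun (F.sup f) = ∑ i ∈ F, b.toFun (f i) := by
  induction F using Finset.induction_on with
  | empty => simpa using BFun_bot b
  | @insert a F hx ih =>
    rw [Finset.sup_insert, Finset.sum_insert hx]
    rw [BFun_disjoint_add b, ih]
    · intro i hi j hj hij
      exact hdis i (Finset.mem_insert_of_mem hi) j (Finset.mem_insert_of_mem hj) hij
    · rw [Finset.disjoint_sup_right]
      intro i hi
      exact hdis a (Finset.mem_insert_self a F) i (Finset.mem_insert_of_mem hi)
        (fun h => hx (h ▸ hi))

lemma series_value (s : ℕ → α) (hs : MutuallyIndependent b s) (p : ℝ)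
    (hp : ∀ n, b.toFun (s n) = p) (T : Finset ℕ) :
    ∀ K : Finset ℕ, Disjoint K T →
      b.toFun (K.inf s ⊓ T.inf (fun i => (s i)ᶜ)) =
        p ^ K.card * (1 - p) ^ T.card := by
  induction T using Finset.induction_on with
  | empty =>
    intro K _
    rw [Finset.inf_empty, inf_top_eq, hs K]
    simp [hp]
  | @insert j T' hjT' ih =>
    intro K hK
    have hjK : j ∉ K := fun h => (Finset.disjoint_left.mp hK h) (Finset.mem_insert_self j T')
    have hKT' : Disjoint K T' := hK.mono_right (Finset.subset_insert j T')
    have hAx := b.inf_add_inf_compl (K.inf s ⊓ T'.inf (fun i => (s i)ᶜ)) (s j)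
    have e1 : K.inf s ⊓ T'.inf (fun i => (s i)ᶜ) ⊓ s j
        = (insert j K).inf s ⊓ T'.inf (fun i => (s i)ᶜ) := by
      rw [Finset.inf_insert]
      ac_rfl
    have e2 : K.inf s ⊓ T'.inf (fun i => (s i)ᶜ) ⊓ (s j)ᶜ
        = K.inf s ⊓ (insert j T').inf (fun i => (s i)ᶜ) := by
      rw [Finset.inf_insert]
      ac_rfl
    rw [e1, e2] at hAx
    have hins : Disjoint (insert j K) T' := by
      rw [Finset.insert_eq, Finset.disjoint_union_left]
      exact ⟨by simpa using hjT', hKT'⟩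
    have v1 := ih K hKT'
    have v2 := ih (insert j K) hins
    rw [Finset.card_insert_of_notMem hjK] at v2
    rw [Finset.card_insert_of_notMem hjT']
    rw [v1, v2] at hAx
    have : b.toFun (K.inf s ⊓ (insert j T').inf fun i => (s i)ᶜ)
        = p ^ K.card * (1 - p) ^ T'.card - p ^ (K.card + 1) * (1 - p) ^ T'.card := by
      linarith
    rw [this]; ring

end Aux

/-- The `[s]`-sum of range `r` with V-number `k`: the join over all
`k`-element subsets `K` of `{0, …, r−1}` of the `[s]`-series
`(⨅ i ∈ K, s i) ⊓ (⨅ i ∈ {0,…,r−1} \ K, (s i)ᶜ)`. -/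
def seriesSum {α : Type*} [BooleanAlgebra α] (s : ℕ → α) (r k : ℕ) : α :=
  ((Finset.range r).powersetCard k).sup fun K =>
    K.inf s ⊓ (Finset.range r \ K).inf fun i => (s i)ᶜ

/-- Th. 5 (Bernoulli Formula): if `s` is mutually independent for the
B-function `b` and `b(s n) = p` for all `n`, then for `k ≤ r`,
`b(t[s](r,k)) = C(r,k) · p^k · (1−p)^(r−k)`. -/
theorem bernoulli_formula {α : Type*} [BooleanAlgebra α] (b : BFunction α)
    (s : ℕ → α) (hs : MutuallyIndependent b s) (p : ℝ)
    (hp : ∀ n, b.toFun (s n) = p) (r k : ℕ) (hkr : k ≤ r) :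
    b.toFun (seriesSum s r k) =
      (r.choose k : ℝ) * p ^ k * (1 - p) ^ (r - k) := by
  unfold seriesSum
  rw [BFun_sup_sum]
  · have hval : ∀ K ∈ (Finset.range r).powersetCard k,
        b.toFun (K.inf s ⊓ (Finset.range r \ K).inf fun i => (s i)ᶜ)
          = p ^ k * (1 - p) ^ (r - k) := by
      intro K hK
      rw [Finset.mem_powersetCard] at hK
      rw [series_value b s hs p hp _ K Finset.disjoint_sdiff]
      rw [hK.2, Finset.card_sdiff_of_subset hK.1, Finset.card_range, hK.2]
    rw [Finset.sum_congr rfl hval, Finset.sum_const, Finset.card_powersetCard,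
      Finset.card_range, nsmul_eq_mul, mul_assoc]
  · intro K hK K' hK' hne
    rw [Finset.mem_powersetCard] at hK hK'
    have hns : ¬ K ⊆ K' := fun h =>
      hne (Finset.eq_of_subset_of_card_le h (by rw [hK.2, hK'.2]))
    obtain ⟨i, hiK, hiK'⟩ := Finset.not_subset.mp hns
    have h1 : K.inf s ⊓ (Finset.range r \ K).inf (fun i => (s i)ᶜ) ≤ s i :=
      le_trans inf_le_left (Finset.inf_le hiK)
    have h2 : K'.inf s ⊓ (Finset.range r \ K').inf (fun i => (s i)ᶜ) ≤ (s i)ᶜ :=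
      le_trans inf_le_right (Finset.inf_le (Finset.mem_sdiff.mpr ⟨hK.1 hiK, hiK'⟩))
    exact disjoint_compl_right.mono h1 h2
end

section
/- (Th. 8, logical Law of Large Numbers) Let b be a B-function on a Boolean algebra α, let s : ℕ → α be mutually independent for b, and suppose there is a real number p with b(s(n)) = p for all n. Then for every real ε > 0 and every natural number r ≥ 1, b(⨆_{k ∈ ℕ, k ≤ r, r·(p−ε) ≤ k ≤ r·(p+ε)} t[s](r,k)) ≥ 1 − p·(1−p)/(r·ε²). -/
namespace LLLNaux

variable {α : Type*} [BooleanAlgebra α] (b : BFunction α)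

lemma b_bot : b.toFun ⊥ = 0 := by
  have h := b.inf_add_inf_compl ⊥ ⊥
  simp only [inf_idem, inf_compl_self, bot_inf_eq] at h
  linarith

lemma b_disj_sup {A B : α} (h : A ⊓ B = ⊥) :
    b.toFun (A ⊔ B) = b.toFun A + b.toFun B := by
  have h1 := b.inf_add_inf_compl (A ⊔ B) B
  have e1 : (A ⊔ B) ⊓ B = B := inf_eq_right.mpr le_sup_right
  have e2 : (A ⊔ B) ⊓ Bᶜ = A := by
    rw [inf_sup_right, inf_compl_self, sup_bot_eq]
    exact inf_eq_left.mpr (le_compl_iff_disjoint_right.mpr (disjoint_iff.mpr h))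
  rw [e1, e2] at h1
  linarith

lemma b_sup_sum {ι : Type*} (T : Finset ι) (f : ι → α)
    (hd : ∀ i ∈ T, ∀ j ∈ T, i ≠ j → f i ⊓ f j = ⊥) :
    b.toFun (T.sup f) = ∑ i ∈ T, b.toFun (f i) := by
  classical
  induction T using Finset.induction_on with
  | empty => simpa using b_bot b
  | @insert a T' hx ih =>
    rw [Finset.sup_insert, Finset.sum_insert hx]
    have hdisj : f a ⊓ T'.sup f = ⊥ := by
      rw [Finset.sup_inf_distrib_left]
      refine le_bot_iff.mp (Finset.sup_le fun j hj => ?_)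
      exact le_of_eq (hd a (Finset.mem_insert_self a T') j
        (Finset.mem_insert_of_mem hj) (fun h => hx (h ▸ hj)))
    rw [b_disj_sup b hdisj, ih (fun i hi j hj hij =>
      hd i (Finset.mem_insert_of_mem hi) j (Finset.mem_insert_of_mem hj) hij)]

lemma b_indep {s : ℕ → α} (hs : MutuallyIndependent b s) (S : Finset ℕ) :
    ∀ K : Finset ℕ, Disjoint K S →
      b.toFun (K.inf s ⊓ S.inf (fun i => (s i)ᶜ)) =
        (∏ i ∈ K, b.toFun (s i)) * ∏ j ∈ S, (1 - b.toFun (s j)) := by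
  classical
  induction S using Finset.induction_on with
  | empty => intro K _; simpa using hs K
  | @insert j S' hj ih =>
    intro K hdisj
    have hjK : j ∉ K := fun h => (Finset.disjoint_left.mp hdisj h)
      (Finset.mem_insert_self j S')
    have hKS' : Disjoint K S' :=
      hdisj.mono_right (Finset.subset_insert j S')
    have hins : Disjoint (insert j K) S' := by
      rw [Finset.disjoint_left]
      intro a ha haS'
      rcases Finset.mem_insert.mp ha with rfl | ha
      · exact hj haS'
      · exact Finset.disjoint_left.mp hKS' ha haS'
    set A := K.inf s ⊓ S'.inf (fun i => (s i)ᶜ) with hA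
    have e1 : K.inf s ⊓ (insert j S').inf (fun i => (s i)ᶜ) = A ⊓ (s j)ᶜ := by
      rw [Finset.inf_insert, hA]
      rw [inf_comm ((s j)ᶜ), inf_assoc]
    have e2 : A ⊓ s j = (insert j K).inf s ⊓ S'.inf (fun i => (s i)ᶜ) := by
      rw [Finset.inf_insert, hA]
      rw [inf_comm (s j)]
      rw [inf_assoc, inf_comm (S'.inf _), ← inf_assoc]
    have key := b.inf_add_inf_compl A (s j)
    have hA2 : b.toFun (A ⊓ s j) =
        (∏ i ∈ insert j K, b.toFun (s i)) * ∏ i ∈ S', (1 - b.toFun (s i)) := by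
      rw [e2]; exact ih (insert j K) hins
    rw [hA2, ih K hKS', Finset.prod_insert hjK] at key
    rw [e1, Finset.prod_insert hj]
    nlinarith [key]

lemma sumW (p : ℝ) (r : ℕ) :
    ∑ k ∈ Finset.range (r + 1), (r.choose k : ℝ) * p ^ k * (1 - p) ^ (r - k) = 1 := by
  have := bernsteinPolynomial.sum ℝ r
  apply_fun (Polynomial.aeval p) at this
  simp only [map_sum, bernsteinPolynomial, map_mul, map_pow, map_sub, map_one,
    Polynomial.aeval_X, map_natCast, nsmul_eq_mul, map_nsmul] at this
  exact this

lemma varW (p : ℝ) (r : ℕ) :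
    ∑ k ∈ Finset.range (r + 1),
      ((r : ℝ) * p - k) ^ 2 * ((r.choose k : ℝ) * p ^ k * (1 - p) ^ (r - k)) =
      (r : ℝ) * p * (1 - p) := by
  have := bernsteinPolynomial.variance ℝ r
  apply_fun (Polynomial.aeval p) at this
  simp only [map_sum, bernsteinPolynomial, map_mul, map_pow, map_sub, map_one,
    Polynomial.aeval_X, map_natCast, nsmul_eq_mul, map_nsmul] at this
  rw [← this]

/-- the `[s]`-series event attached to a subset `K`. -/
private def g (s : ℕ → α) (r : ℕ) (K : Finset ℕ) : α :=
  K.inf s ⊓ (Finset.range r \ K).inf fun i => (s i)ᶜ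

lemma g_disj_aux {s : ℕ → α} {r : ℕ} {K K' : Finset ℕ}
    (hK : K ⊆ Finset.range r) (hK' : K' ⊆ Finset.range r)
    {i : ℕ} (hiK : i ∈ K) (hiK' : i ∉ K') : g s r K ⊓ g s r K' = ⊥ := by
  have h1 : g s r K ≤ s i := le_trans inf_le_left (Finset.inf_le hiK)
  have h2 : g s r K' ≤ (s i)ᶜ :=
    le_trans inf_le_right (Finset.inf_le (Finset.mem_sdiff.mpr ⟨hK hiK, hiK'⟩))
  exact le_bot_iff.mp ((inf_le_inf h1 h2).trans (by simp))

lemma g_disj {s : ℕ → α} {r : ℕ} {K K' : Finset ℕ}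
    (hK : K ⊆ Finset.range r) (hK' : K' ⊆ Finset.range r)
    (hne : K ≠ K') : g s r K ⊓ g s r K' = ⊥ := by
  by_cases h : K ⊆ K'
  · have : ¬ K' ⊆ K := fun h' => hne (Finset.Subset.antisymm h h')
    obtain ⟨i, hiK', hiK⟩ := Finset.not_subset.mp this
    rw [inf_comm]
    exact g_disj_aux hK' hK hiK' hiK
  · obtain ⟨i, hiK, hiK'⟩ := Finset.not_subset.mp h
    exact g_disj_aux hK hK' hiK hiK'

lemma b_g {s : ℕ → α} (hs : MutuallyIndependent b s) {p : ℝ}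
    (hp : ∀ n, b.toFun (s n) = p) {r k : ℕ} {K : Finset ℕ}
    (hK : K ∈ (Finset.range r).powersetCard k) :
    b.toFun (g s r K) = p ^ k * (1 - p) ^ (r - k) := by
  obtain ⟨hsub, hcard⟩ := Finset.mem_powersetCard.mp hK
  have hdisj : Disjoint K (Finset.range r \ K) := Finset.disjoint_sdiff
  have := b_indep b hs (Finset.range r \ K) K hdisj
  have h1 : ∏ i ∈ K, b.toFun (s i) = p ^ k := by
    rw [Finset.prod_congr rfl (fun i _ => hp i), Finset.prod_const, hcard]
  have h2 : ∏ j ∈ Finset.range r \ K, (1 - b.toFun (s j)) = (1 - p) ^ (r - k) := by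
    rw [Finset.prod_congr rfl (fun i _ => by rw [hp i]), Finset.prod_const,
      Finset.card_sdiff_of_subset hsub, Finset.card_range, hcard]
  rw [g, this, h1, h2]

lemma b_seriesSum {s : ℕ → α} (hs : MutuallyIndependent b s) {p : ℝ}
    (hp : ∀ n, b.toFun (s n) = p) (r k : ℕ) :
    b.toFun (seriesSum s r k) = (r.choose k : ℝ) * p ^ k * (1 - p) ^ (r - k) := by
  have hdall : ∀ K ∈ (Finset.range r).powersetCard k,
      ∀ K' ∈ (Finset.range r).powersetCard k, K ≠ K' → g s r K ⊓ g s r K' = ⊥ := by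
    intro K hK K' hK' hne
    exact g_disj (Finset.mem_powersetCard.mp hK).1 (Finset.mem_powersetCard.mp hK').1 hne
  have : seriesSum s r k = ((Finset.range r).powersetCard k).sup (g s r) := rfl
  rw [this, b_sup_sum b _ _ hdall]
  rw [Finset.sum_congr rfl (fun K hK => b_g b hs hp hK), Finset.sum_const,
    Finset.card_powersetCard, Finset.card_range, nsmul_eq_mul, mul_assoc]

lemma seriesSum_disj {s : ℕ → α} {r k k' : ℕ} (hne : k ≠ k') :
    seriesSum s r k ⊓ seriesSum s r k' = ⊥ := by
  refine le_bot_iff.mp ?_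
  rw [seriesSum, Finset.sup_inf_distrib_right]
  refine Finset.sup_le fun K hK => ?_
  rw [seriesSum, Finset.sup_inf_distrib_left]
  refine Finset.sup_le fun K' hK' => ?_
  have hKne : K ≠ K' := by
    intro h
    apply hne
    rw [← (Finset.mem_powersetCard.mp hK).2, ← (Finset.mem_powersetCard.mp hK').2, h]
  exact le_of_eq (g_disj (Finset.mem_powersetCard.mp hK).1
    (Finset.mem_powersetCard.mp hK').1 hKne)

end LLLNaux

open LLLNaux in
/-- Th. 8 (logical Law of Large Numbers): if `s` is mutually independent for
the B-function `b` and `b(s n) = p` for all `n`, then for every real `ε > 0`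
and every natural `r ≥ 1`,
`b(⨆_{k ≤ r, r(p−ε) ≤ k ≤ r(p+ε)} t[s](r,k)) ≥ 1 − p(1−p)/(r ε²)`. -/
theorem logical_law_of_large_numbers {α : Type*} [BooleanAlgebra α]
    (b : BFunction α) (s : ℕ → α) (hs : MutuallyIndependent b s) (p : ℝ)
    (hp : ∀ n, b.toFun (s n) = p) (ε : ℝ) (hε : 0 < ε) (r : ℕ) (hr : 1 ≤ r) :
    b.toFun (((Finset.range (r + 1)).filter
        (fun (k : ℕ) => (r : ℝ) * (p - ε) ≤ (k : ℝ) ∧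
          (k : ℝ) ≤ (r : ℝ) * (p + ε))).sup fun k => seriesSum s r k) ≥
      1 - p * (1 - p) / ((r : ℝ) * ε ^ 2) := by
  classical
  set W : ℕ → ℝ := fun k => (r.choose k : ℝ) * p ^ k * (1 - p) ^ (r - k) with hW
  have hp0 : 0 ≤ p := hp 0 ▸ b.nonneg (s 0)
  have hp1 : p ≤ 1 := hp 0 ▸ b.le_one (s 0)
  have hW0 : ∀ k, 0 ≤ W k := by
    intro k
    have : (0:ℝ) ≤ 1 - p := by linarith
    positivity
  set cond : ℕ → Prop := fun k =>
    (r : ℝ) * (p - ε) ≤ (k : ℝ) ∧ (k : ℝ) ≤ (r : ℝ) * (p + ε) with hcond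
  set F := (Finset.range (r + 1)).filter cond with hF
  set G := (Finset.range (r + 1)).filter (fun k => ¬ cond k) with hG
  have hbF : b.toFun (F.sup fun k => seriesSum s r k) = ∑ k ∈ F, W k := by
    rw [b_sup_sum b F _ (fun i _ j _ hij => seriesSum_disj hij)]
    exact Finset.sum_congr rfl fun k _ => b_seriesSum b hs hp r k
  have hsplit : ∑ k ∈ F, W k + ∑ k ∈ G, W k = 1 := by
    rw [hF, hG, Finset.sum_filter_add_sum_filter_not]
    exact sumW p r
  have hrpos : (0:ℝ) < r := by exact_mod_cast hr
  have hbound : ∑ k ∈ G, W k ≤ p * (1 - p) / ((r : ℝ) * ε ^ 2) := by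
    have key : ((r:ℝ) * ε) ^ 2 * ∑ k ∈ G, W k ≤ (r : ℝ) * p * (1 - p) := by
      rw [← varW p r, Finset.mul_sum]
      refine le_trans (Finset.sum_le_sum ?_)
        (Finset.sum_le_sum_of_subset_of_nonneg (Finset.filter_subset _ _)
          (fun k _ _ => mul_nonneg (sq_nonneg _) (hW0 k)))
      intro k hk
      have hnk : ¬ cond k := (Finset.mem_filter.mp hk).2
      have hnk' : ¬ ((r : ℝ) * (p - ε) ≤ (k : ℝ) ∧ (k : ℝ) ≤ (r : ℝ) * (p + ε)) := hnk
      push_neg at hnk'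
      have habs : (r : ℝ) * ε ≤ |(r : ℝ) * p - k| := by
        rcases lt_or_ge ((k : ℝ)) ((r : ℝ) * (p - ε)) with h | h
        · rw [abs_of_nonneg (by nlinarith)]
          nlinarith
        · have h2 := hnk' h
          rw [abs_of_nonpos (by nlinarith)]
          nlinarith
      have hsq : ((r:ℝ) * ε) ^ 2 ≤ ((r : ℝ) * p - k) ^ 2 := by
        rw [← sq_abs ((r : ℝ) * p - k)]
        exact pow_le_pow_left₀ (by positivity) habs 2
      exact mul_le_mul_of_nonneg_right hsq (hW0 k)
    have hpos : (0:ℝ) < ((r:ℝ) * ε) ^ 2 := by positivity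
    calc ∑ k ∈ G, W k ≤ (r : ℝ) * p * (1 - p) / ((r:ℝ) * ε) ^ 2 := by
          rw [le_div_iff₀ hpos]; linarith [key]
      _ = p * (1 - p) / ((r : ℝ) * ε ^ 2) := by
          field_simp
  rw [ge_iff_le, hbF]
  linarith [hsplit, hbound]
end
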